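/- Let c_1 = c_{1, π/2}. Then for every real s > 1 the integral ∫_0^∞ e^{−st} c_1(t) dt converges absolutely and equals arctan(√(s²−1)) / √(s²−1). -/

import Mathlib

open scoped Nat

/-- The function `c_{d,α}` of the paper: the candidate (rescaled radial profile of the)
Weyl symbol of the inverse of the harmonic oscillator, depending on a parameter `α`. -/
noncomputable def cda (d : ℕ) (α : ℝ) (t : ℝ) : ℝ :=
  ((d‼ : ℝ) / d) *
    (α * (∑' p : ℕ, t ^ (2*p) / (((2*p)‼ * (2*p + d - 1)‼ : ℕ) : ℝ)) -
      ∑' p : ℕ, t ^ (2*p+1) / (((2*p+1)‼ * (2*p + d)‼ : ℕ) : ℝ))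

open MeasureTheory

/-!
Expanding `exp (-t sin θ)` in powers and integrating term by term against the Wallis
integrals `∫₀^{π/2} sin^n = (π/2 or 1) · n! / (n‼)²` gives `c₁(t) = ∫₀^{π/2} exp (-t sin θ) dθ`.
By Fubini the Laplace transform is then `∫₀^{π/2} dθ / (s + sin θ)`, which the substitution
`x = tan (θ/2)` evaluates to `arctan √(s² - 1) / √(s² - 1)`.
-/

open Real Set

lemma factorial_div_doubleFactorial_sq_add_two (n : ℕ) :
    ((n + 2)! : ℝ) / ((n + 2)‼ : ℝ) ^ 2 = (n + 1) / (n + 2) * (n ! / (n‼ : ℝ) ^ 2) := by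
  rw [Nat.doubleFactorial_add_two, Nat.factorial_succ, Nat.factorial_succ]
  have : (n‼ : ℝ) ≠ 0 := by positivity
  push_cast
  field_simp
  ring

lemma integral_sin_pow_add_two_zero_pi_div_two (n : ℕ) :
    ∫ x in (0 : ℝ)..π / 2, sin x ^ (n + 2) =
      (n + 1) / (n + 2) * ∫ x in (0 : ℝ)..π / 2, sin x ^ n := by
  simp [integral_sin_pow]

lemma integral_sin_pow_two_mul_zero_pi_div_two (p : ℕ) :
    ∫ x in (0 : ℝ)..π / 2, sin x ^ (2 * p) = π / 2 * ((2 * p)! / ((2 * p)‼ : ℝ) ^ 2) := by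
  induction p with
  | zero => simp
  | succ p ih =>
    rw [show 2 * (p + 1) = 2 * p + 2 by ring, integral_sin_pow_add_two_zero_pi_div_two, ih,
      factorial_div_doubleFactorial_sq_add_two]
    push_cast
    ring

lemma integral_sin_pow_two_mul_add_one_zero_pi_div_two (p : ℕ) :
    ∫ x in (0 : ℝ)..π / 2, sin x ^ (2 * p + 1) =
      (2 * p + 1)! / ((2 * p + 1)‼ : ℝ) ^ 2 := by
  induction p with
  | zero => simp
  | succ p ih =>
    rw [show 2 * (p + 1) + 1 = 2 * p + 1 + 2 by ring, integral_sin_pow_add_two_zero_pi_div_two,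
      ih, factorial_div_doubleFactorial_sq_add_two]

theorem hasSum_intervalIntegral_pow_div_factorial {f : ℝ → ℝ} (hf : Continuous f)
    (a b : ℝ) :
    HasSum (fun n => (∫ x in a..b, f x ^ n) / n !) (∫ x in a..b, exp (f x)) := by
  obtain ⟨M, hM⟩ :=
    (isCompact_uIcc (a := a) (b := b)).exists_bound_of_continuousOn hf.continuousOn
  simp_rw [← intervalIntegral.integral_div]
  refine intervalIntegral.hasSum_integral_of_dominated_convergence (fun n _ => M ^ n / n !)
    (fun n => ((hf.pow n).div_const _).aestronglyMeasurable) (fun n => ?_)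
    (.of_forall fun _ _ => Real.summable_pow_div_factorial M) intervalIntegrable_const
    (.of_forall fun x _ => by
      simpa [Real.exp_eq_exp_ℝ] using NormedSpace.expSeries_div_hasSum_exp (f x))
  refine .of_forall fun x hx => ?_
  rw [norm_div, norm_pow, RCLike.norm_natCast]
  gcongr
  exact hM x (uIoc_subset_uIcc hx)

lemma cda_one_pi_div_two_eq_integral (t : ℝ) :
    cda 1 (π / 2) t = ∫ θ in (0 : ℝ)..π / 2, exp (-(t * sin θ)) := by
  set F : ℕ → ℝ := fun n => (∫ θ in (0 : ℝ)..π / 2, (-(t * sin θ)) ^ n) / (n ! : ℝ)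
  have hF : HasSum F (∫ θ in (0 : ℝ)..π / 2, exp (-(t * sin θ))) :=
    hasSum_intervalIntegral_pow_div_factorial (by fun_prop) 0 (π / 2)
  have hF_moments (n : ℕ) : F n = (-t) ^ n / n ! * ∫ θ in (0 : ℝ)..π / 2, sin θ ^ n := by
    simp only [F, neg_mul_eq_neg_mul, mul_pow, intervalIntegral.integral_const_mul]
    ring
  have hF_even (p : ℕ) : F (2 * p) = π / 2 * (t ^ (2 * p) / ((2 * p)‼ : ℝ) ^ 2) := by
    have : ((2 * p)! : ℝ) ≠ 0 := by positivity
    rw [hF_moments, integral_sin_pow_two_mul_zero_pi_div_two, Even.neg_pow ⟨p, by ring⟩]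
    field_simp
  have hF_odd (p : ℕ) : F (2 * p + 1) = -(t ^ (2 * p + 1) / ((2 * p + 1)‼ : ℝ) ^ 2) := by
    have : ((2 * p + 1)! : ℝ) ≠ 0 := by positivity
    rw [hF_moments, integral_sin_pow_two_mul_add_one_zero_pi_div_two, Odd.neg_pow ⟨p, by ring⟩]
    field_simp
  rw [← hF.tsum_eq,
    ← tsum_even_add_odd (hF.summable.comp_injective (mul_right_injective₀ two_ne_zero))
      (hF.summable.comp_injective fun _ _ h => by simpa using h)]
  simp only [cda, hF_even, hF_odd, tsum_mul_left, tsum_neg]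
  norm_num [sq, sub_eq_add_neg]

theorem hasDerivAt_arctan_tan_half_div {s u θ : ℝ} (hu : u ^ 2 = s ^ 2 - 1) (hu0 : u ≠ 0)
    (hθ : cos (θ / 2) ≠ 0) :
    HasDerivAt (fun x => 2 / u * arctan ((s * tan (x / 2) + 1) / u)) (s + sin θ)⁻¹ θ := by
  have htan : HasDerivAt (fun x => tan (x / 2)) (1 / cos (θ / 2) ^ 2 * (1 / 2)) θ := by
    simpa [Function.comp_def] using (hasDerivAt_tan hθ).comp θ ((hasDerivAt_id θ).div_const 2)
  refine ((((htan.const_mul s).add_const 1).div_const u).arctan.const_mul (2 / u)).congr_deriv ?_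
  -- after clearing denominators, `1 + ((s tan (θ/2) + 1) / u)² = s (s + sin θ) / (u cos (θ/2))²`
  have hkey :
      cos (θ / 2) ^ 2 * u ^ 2 + (s * sin (θ / 2) + cos (θ / 2)) ^ 2 = s * (s + sin θ) := by
    rw [show sin θ = 2 * sin (θ / 2) * cos (θ / 2) by rw [← sin_two_mul]; ring_nf, hu]
    linear_combination s ^ 2 * sin_sq_add_cos_sq (θ / 2)
  have hpos : 0 < s * (s + sin θ) := by rw [← hkey]; positivity
  have hs : s ≠ 0 := by rintro rfl; simp at hpos
  have hssin : s + sin θ ≠ 0 := by rintro h; simp [h] at hpos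
  rw [tan_eq_sin_div_cos]
  field_simp
  linear_combination -hkey

lemma two_mul_arctan_sub_two_mul_arctan_inv {s u : ℝ} (hs : 0 < s) (hu : 0 < u)
    (hus : u ^ 2 = s ^ 2 - 1) :
    2 * arctan ((s + 1) / u) - 2 * arctan u⁻¹ = arctan u := by
  have hs1 : s + 1 ≠ 0 := by positivity
  have hv : u / (s + 1) * (u / (s + 1)) < 1 := by
    rw [div_mul_div_comm, div_lt_one (by positivity)]
    nlinarith
  have hsub : arctan ((s + 1) / u) = arctan u⁻¹ + arctan (u / (s + 1)) := by
    rw [arctan_add (by rw [← div_eq_inv_mul, div_div, div_lt_one (by positivity)]; nlinarith)]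
    congr 1
    field_simp [hs.ne']
    linear_combination -hus
  have hdouble : arctan (u / (s + 1)) + arctan (u / (s + 1)) = arctan u := by
    rw [arctan_add hv]
    congr 1
    rw [div_eq_iff (by linarith)]
    field_simp
    linear_combination hus
  linear_combination 2 * hsub + hdouble

theorem integral_inv_add_sin_zero_pi_div_two {s : ℝ} (hs : 1 < s) :
    ∫ θ in (0 : ℝ)..π / 2, (s + sin θ)⁻¹ = arctan √(s ^ 2 - 1) / √(s ^ 2 - 1) := by
  set u := √(s ^ 2 - 1)
  have hu : 0 < u := Real.sqrt_pos.mpr (by nlinarith)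
  have hus : u ^ 2 = s ^ 2 - 1 := Real.sq_sqrt (by nlinarith)
  have hsin (θ : ℝ) : s + sin θ ≠ 0 := by linarith [neg_one_le_sin θ]
  have hcont : Continuous fun θ => (s + sin θ)⁻¹ :=
    (continuous_const.add continuous_sin).inv₀ hsin
  have hderiv : ∀ θ ∈ uIcc 0 (π / 2),
      HasDerivAt (fun x => 2 / u * arctan ((s * tan (x / 2) + 1) / u)) (s + sin θ)⁻¹ θ := by
    intro θ hθ
    rw [uIcc_of_le (by positivity)] at hθ
    refine hasDerivAt_arctan_tan_half_div hus hu.ne' (cos_pos_of_mem_Ioo ⟨?_, ?_⟩).ne' <;>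
      linarith [pi_pos, hθ.1, hθ.2]
  rw [intervalIntegral.integral_eq_sub_of_hasDerivAt hderiv (hcont.intervalIntegrable _ _),
    show π / 2 / 2 = π / 4 by ring, tan_pi_div_four,
    ← two_mul_arctan_sub_two_mul_arctan_inv (by linarith) hu hus]
  simp only [mul_one, zero_div, tan_zero, mul_zero, zero_add, one_div]
  ring

lemma integral_exp_neg_mul_Ioi_zero {c : ℝ} (hc : 0 < c) :
    ∫ t in Ioi (0 : ℝ), exp (-(c * t)) = c⁻¹ := by
  simpa [neg_mul, div_neg, neg_div] using integral_exp_mul_Ioi (a := -c) (by linarith) 0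

theorem laplace_setIntegral_exp_neg_mul {g : ℝ → ℝ} (hg : Continuous g) {a b s : ℝ}
    (hs : 0 < s) (hg0 : ∀ θ ∈ Ioc a b, 0 ≤ g θ) :
    IntegrableOn (fun t => exp (-(s * t)) * ∫ θ in Ioc a b, exp (-(t * g θ))) (Ioi 0) ∧
      ∫ t in Ioi 0, exp (-(s * t)) * ∫ θ in Ioc a b, exp (-(t * g θ)) =
        ∫ θ in Ioc a b, (s + g θ)⁻¹ := by
  set F : ℝ × ℝ → ℝ := fun q => exp (-((s + g q.2) * q.1))
  have hF_eq (t : ℝ) :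
      exp (-(s * t)) * ∫ θ in Ioc a b, exp (-(t * g θ)) = ∫ θ in Ioc a b, F (t, θ) := by
    rw [← integral_const_mul]
    congr 1 with θ
    simp only [F, ← exp_add]
    ring_nf
  have hF_int : Integrable F ((volume.restrict (Ioi 0)).prod (volume.restrict (Ioc a b))) := by
    have hdom : Integrable (fun q : ℝ × ℝ => exp (-s * q.1) * 1)
        ((volume.restrict (Ioi 0)).prod (volume.restrict (Ioc a b))) :=
      (exp_neg_integrableOn_Ioi 0 hs).mul_prod (integrable_const 1)
    refine hdom.mono (by fun_prop : Continuous F).aestronglyMeasurable ?_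
    rw [Measure.prod_restrict]
    refine ae_restrict_of_forall_mem (measurableSet_Ioi.prod measurableSet_Ioc) ?_
    rintro ⟨t, θ⟩ ⟨ht, hθ⟩
    simp only [F, norm_eq_abs, abs_exp, mul_one]
    gcongr
    nlinarith [hg0 θ hθ, ht.out]
  simp_rw [hF_eq]
  refine ⟨hF_int.integral_prod_left, ?_⟩
  rw [integral_integral_swap hF_int]
  refine setIntegral_congr_fun measurableSet_Ioc fun θ hθ => ?_
  exact integral_exp_neg_mul_Ioi_zero (c := s + g θ) (by linarith [hg0 θ hθ])

theorem stmt9 (s : ℝ) (hs : 1 < s) :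
    IntegrableOn (fun t : ℝ => Real.exp (-(s * t)) * cda 1 (Real.pi / 2) t) (Set.Ioi 0) ∧
    (∫ t in Set.Ioi (0:ℝ), Real.exp (-(s * t)) * cda 1 (Real.pi / 2) t)
      = Real.arctan (Real.sqrt (s^2 - 1)) / Real.sqrt (s^2 - 1) := by
  have hπ : (0 : ℝ) ≤ π / 2 := by positivity
  have hsin : ∀ θ ∈ Ioc 0 (π / 2), 0 ≤ sin θ := fun θ hθ =>
    sin_nonneg_of_nonneg_of_le_pi hθ.1.le (by linarith [hθ.2, pi_pos])
  obtain ⟨hint, heq⟩ :=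
    laplace_setIntegral_exp_neg_mul continuous_sin (s := s) (by linarith) hsin
  simp only [cda_one_pi_div_two_eq_integral, intervalIntegral.integral_of_le hπ]
  refine ⟨hint, heq.trans ?_⟩
  rw [← intervalIntegral.integral_of_le hπ, integral_inv_add_sin_zero_pi_div_two hs]
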